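/- Let g ≥ 2 and let a be an integer with 2a ≥ g. Let U be an open subset of Sym_g(ℂ) and F : U → ℂ holomorphic. Then for every τ ∈ U with F(τ) = 0, one has D_{Q_{g,a}}(F,…,F)(τ) = g! · det(∂F(τ)). -/

import Mathlib

open scoped BigOperators Matrix

noncomputable section

abbrev MatC (g : ℕ) : Type := Fin g → Fin g → ℂ

def symSubmodule (g : ℕ) : Submodule ℂ (MatC g) where
  carrier := {A | ∀ i j, A i j = A j i}
  add_mem' := by
    intro A B hA hB i j
    simp only [Set.mem_setOf_eq, Pi.add_apply] at *
    rw [hA i j, hB i j]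
  zero_mem' := by intro i j; rfl
  smul_mem' := by
    intro c A hA i j
    simp only [Set.mem_setOf_eq, Pi.smul_apply] at *
    rw [hA i j]

abbrev SymC (g : ℕ) : Type := ↥(symSubmodule g)

def symE2 (g : ℕ) (s : Sym2 (Fin g)) : SymC g :=
  ⟨fun u v => if s = s(u, v) then (if u = v then 2 else 1) else 0, by
    intro u v
    simp only []
    have h1 : s(v, u) = s(u, v) := Sym2.eq_swap
    show (if s = s(u,v) then (if u = v then (2:ℂ) else 1) else 0)
        = (if s = s(v,u) then (if v = u then 2 else 1) else 0)
    rw [h1]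
    by_cases huv : u = v
    · subst huv; rfl
    · have hvu : ¬ v = u := fun e => huv e.symm
      simp [huv, hvu]⟩

def pdMat (g : ℕ) (F : SymC g → ℂ) (τ : SymC g) : Matrix (Fin g) (Fin g) ℂ :=
  Matrix.of fun i j => (1 / 2 : ℂ) * fderiv ℂ F τ (symE2 g s(i, j))

/-- Variable index for the polynomial ring `ℂ[R₁,…,R_g]`: the variable `r_{h;ij} = r_{h;ji}`
corresponds to the pair `(h, {i,j})`. -/
abbrev RVars (g : ℕ) : Type := Fin g × Sym2 (Fin g)

/-- The polynomial ring `ℂ[R₁,…,R_g]` in the entries of `g` generic symmetric `g×g` matrices. -/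
abbrev PolyR (g : ℕ) : Type := MvPolynomial (RVars g) ℂ

/-- `det(t₁R₁ + ⋯ + t_gR_g)` as a polynomial in `t₁,…,t_g` over `ℂ[R₁,…,R_g]`. -/
def detT (g : ℕ) : MvPolynomial (Fin g) (PolyR g) :=
  (Matrix.of fun i j : Fin g =>
      ∑ h : Fin g, MvPolynomial.X h *
        MvPolynomial.C (MvPolynomial.X (h, s(i, j)) : PolyR g)).det

/-- `R(n)`: the coefficient of `t₁^{n₁}⋯t_g^{n_g}` in `det(t₁R₁+⋯+t_gR_g)`. -/
def Rpoly (g : ℕ) (n : Fin g → ℕ) : PolyR g :=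
  MvPolynomial.coeff (Finsupp.equivFunOnFinite.symm n) (detT g)

/-- The substitution `P(R₁,…,R_g) ↦ P(AR₁Aᵀ,…,AR_gAᵀ)`. -/
def substA (g : ℕ) (A : Matrix (Fin g) (Fin g) ℂ) : PolyR g →ₐ[ℂ] PolyR g :=
  MvPolynomial.aeval fun v : RVars g =>
    Sym2.lift ⟨fun i j => ∑ u : Fin g, ∑ w : Fin g,
        MvPolynomial.C (A i u) * MvPolynomial.C (A j w) * MvPolynomial.X (v.1, s(u, w)),
      by
        intro i j
        dsimp only
        rw [Finset.sum_comm]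
        refine Finset.sum_congr rfl fun u _ => Finset.sum_congr rfl fun w _ => ?_
        rw [Sym2.eq_swap]
        ring⟩ v.2


/-- The exponents in a monomial `d` of the variables from the block `R_h`. -/
def restrictRow (g : ℕ) (d : RVars g →₀ ℕ) (h : Fin g) : Sym2 (Fin g) →₀ ℕ :=
  Finsupp.equivFunOnFinite.symm fun s => d (h, s)

/-- The mixed partial derivative `∏_{s} ∂_s^{d s} f` (each `∂_s` being
`((1+δ_{ij})/2)·∂/∂τ_{ij}` for `s = {i,j}`), realized via `iteratedFDeriv`. -/
def monoDeriv (g : ℕ) (d : Sym2 (Fin g) →₀ ℕ) (f : SymC g → ℂ) (τ : SymC g) : ℂ :=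
  (1 / 2 : ℂ) ^ d.toMultiset.toList.length *
    iteratedFDeriv ℂ d.toMultiset.toList.length f τ
      (fun i => (symE2 g (d.toMultiset.toList.get i) : SymC g))

/-- The differential operator `D_Q` attached to a polynomial `Q ∈ ℂ[R₁,…,R_g]`, applied to a
`g`-tuple of functions and evaluated at `τ₁ = ⋯ = τ_g = τ`. -/
def DQop (g : ℕ) (Q : PolyR g) (F : Fin g → SymC g → ℂ) (τ : SymC g) : ℂ :=
  ∑ d ∈ Q.support, Q.coeff d * ∏ h : Fin g, monoDeriv g (restrictRow g d h) (F h) τ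

def Ccoef (g : ℕ) (a : ℂ) (m : ℕ) : ℂ :=
  if m = 1 then ((g : ℂ) - 1) * ∏ i ∈ Finset.Icc 1 (g - 1), (2 * a - (i : ℂ))
  else (-1 : ℂ) ^ (m - 1) * (Nat.factorial (m - 1) : ℂ) * (2 * a) ^ (m - 1) *
    ∏ i ∈ Finset.Icc m (g - 1), (2 * a - (i : ℂ))

def ccoef (g : ℕ) (a : ℂ) (n : Fin g → ℕ) : ℂ :=
  if ∀ h, n h = 1 then Ccoef g a 1
  else if 2 ≤ (Finset.univ.filter fun h => 1 < n h).card then 0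
  else Ccoef g a (Finset.univ.sup n)

def Qpoly (g : ℕ) (a : ℂ) : PolyR g :=
  (Ccoef g a 1)⁻¹ • ∑ n ∈ Finset.Nat.antidiagonalTuple g g, ccoef g a n • Rpoly g n

section AuxProof

open MvPolynomial

/-- The value attached by `DQop` to a monomial exponent `d`. -/
def valD (g : ℕ) (Fam : Fin g → SymC g → ℂ) (τ : SymC g) (d : RVars g →₀ ℕ) : ℂ :=
  ∏ h : Fin g, monoDeriv g (restrictRow g d h) (Fam h) τ

lemma DQop_eq_sum_subset (g : ℕ) (Q : PolyR g) (Fam : Fin g → SymC g → ℂ) (τ : SymC g)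
    (S : Finset (RVars g →₀ ℕ)) (hS : Q.support ⊆ S) :
    DQop g Q Fam τ = ∑ d ∈ S, Q.coeff d * valD g Fam τ d := by
  rw [DQop]
  exact Finset.sum_subset hS fun d _ hd => by
    rw [MvPolynomial.notMem_support_iff.mp hd, zero_mul]

lemma DQop_zero (g : ℕ) (Fam : Fin g → SymC g → ℂ) (τ : SymC g) :
    DQop g 0 Fam τ = 0 := by
  rw [DQop_eq_sum_subset g 0 Fam τ ∅ (by simp)]
  simp

lemma DQop_add (g : ℕ) (Q Q' : PolyR g) (Fam : Fin g → SymC g → ℂ) (τ : SymC g) :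
    DQop g (Q + Q') Fam τ = DQop g Q Fam τ + DQop g Q' Fam τ := by
  classical
  rw [DQop_eq_sum_subset g (Q + Q') Fam τ (Q.support ∪ Q'.support) MvPolynomial.support_add,
    DQop_eq_sum_subset g Q Fam τ (Q.support ∪ Q'.support) Finset.subset_union_left,
    DQop_eq_sum_subset g Q' Fam τ (Q.support ∪ Q'.support) Finset.subset_union_right,
    ← Finset.sum_add_distrib]
  exact Finset.sum_congr rfl fun d _ => by rw [MvPolynomial.coeff_add, add_mul]

lemma DQop_smul (g : ℕ) (c : ℂ) (Q : PolyR g) (Fam : Fin g → SymC g → ℂ) (τ : SymC g) :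
    DQop g (c • Q) Fam τ = c * DQop g Q Fam τ := by
  classical
  rw [DQop_eq_sum_subset g (c • Q) Fam τ Q.support MvPolynomial.support_smul,
    DQop_eq_sum_subset g Q Fam τ Q.support (le_refl _), Finset.mul_sum]
  exact Finset.sum_congr rfl fun d _ => by
    rw [MvPolynomial.coeff_smul, smul_eq_mul, mul_assoc]

lemma DQop_sum (g : ℕ) {ι : Type*} (s : Finset ι) (Q : ι → PolyR g)
    (Fam : Fin g → SymC g → ℂ) (τ : SymC g) :
    DQop g (∑ x ∈ s, Q x) Fam τ = ∑ x ∈ s, DQop g (Q x) Fam τ := by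
  classical
  induction s using Finset.induction_on with
  | empty => simpa using DQop_zero g Fam τ
  | insert _ _ h ih =>
      rw [Finset.sum_insert h, Finset.sum_insert h, DQop_add, ih]

lemma DQop_monomial (g : ℕ) (d : RVars g →₀ ℕ) (c : ℂ) (Fam : Fin g → SymC g → ℂ)
    (τ : SymC g) :
    DQop g (MvPolynomial.monomial d c) Fam τ = c * valD g Fam τ d := by
  classical
  have hsub : (MvPolynomial.monomial d c).support ⊆ {d} := by
    rw [MvPolynomial.support_monomial]
    split_ifs <;> simp
  rw [DQop_eq_sum_subset g _ Fam τ {d} hsub, Finset.sum_singleton,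
    MvPolynomial.coeff_monomial, if_pos rfl]

lemma prod_X_mul_C {R : Type*} [CommSemiring R] {σ : Type*} {ι : Type*} [DecidableEq ι]
    (s : Finset ι) (f : ι → σ) (c : ι → R) :
    ∏ i ∈ s, (MvPolynomial.X (f i) * MvPolynomial.C (c i)) =
      MvPolynomial.monomial (∑ i ∈ s, Finsupp.single (f i) 1) (∏ i ∈ s, c i) := by
  induction s using Finset.induction_on with
  | empty => simp
  | insert _ _ h ih =>
      rw [Finset.prod_insert h, ih, Finset.sum_insert h, Finset.prod_insert h]
      rw [MvPolynomial.X, MvPolynomial.C_apply, MvPolynomial.monomial_mul,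
        MvPolynomial.monomial_mul]
      simp [mul_comm]

lemma prod_X_eq {R : Type*} [CommSemiring R] {σ : Type*} {ι : Type*} [DecidableEq ι]
    (s : Finset ι) (f : ι → σ) :
    ∏ i ∈ s, (MvPolynomial.X (f i) : MvPolynomial σ R) =
      MvPolynomial.monomial (∑ i ∈ s, Finsupp.single (f i) 1) 1 := by
  have := prod_X_mul_C (R := R) s f fun _ => (1 : R)
  simpa using this

lemma Rpoly_eq (g : ℕ) (n : Fin g → ℕ) :
    Rpoly g n =
      ∑ σ : Equiv.Perm (Fin g),
        ∑ π ∈ Fintype.piFinset fun _ : Fin g => (Finset.univ : Finset (Fin g)),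
          if (∑ i : Fin g, Finsupp.single (π i) 1) = Finsupp.equivFunOnFinite.symm n then
            MvPolynomial.monomial (∑ i : Fin g, Finsupp.single ((π i, s(σ i, i)) : RVars g) 1)
              (((Equiv.Perm.sign σ : ℤ) : ℂ))
          else 0 := by
  classical
  rw [Rpoly, detT, Matrix.det_apply', MvPolynomial.coeff_sum]
  refine Finset.sum_congr rfl fun σ _ => ?_
  have e1 : (∏ i : Fin g,
      (Matrix.of fun i j : Fin g => ∑ h : Fin g, MvPolynomial.X h *
        MvPolynomial.C (MvPolynomial.X (h, s(i, j)) : PolyR g)) (σ i) i)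
      = ∑ π ∈ Fintype.piFinset fun _ : Fin g => (Finset.univ : Finset (Fin g)),
          MvPolynomial.monomial (∑ i : Fin g, Finsupp.single (π i) 1)
            (∏ i : Fin g, (MvPolynomial.X ((π i, s(σ i, i)) : RVars g) : PolyR g)) := by
    rw [show (∏ i : Fin g,
        (Matrix.of fun i j : Fin g => ∑ h : Fin g, MvPolynomial.X h *
          MvPolynomial.C (MvPolynomial.X (h, s(i, j)) : PolyR g)) (σ i) i)
        = ∏ i : Fin g, ∑ h ∈ Finset.univ, MvPolynomial.X h *
            MvPolynomial.C (MvPolynomial.X ((h, s(σ i, i)) : RVars g) : PolyR g) from rfl,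
      Finset.prod_univ_sum]
    exact Finset.sum_congr rfl fun π _ => prod_X_mul_C Finset.univ _ _
  rw [e1, Finset.mul_sum, MvPolynomial.coeff_sum]
  refine Finset.sum_congr rfl fun π _ => ?_
  have hsgn : ((Equiv.Perm.sign σ : ℤ) : MvPolynomial (Fin g) (PolyR g))
      = MvPolynomial.C ((Equiv.Perm.sign σ : ℤ) : PolyR g) := by
    rw [map_intCast]
  rw [hsgn, MvPolynomial.C_mul_monomial, MvPolynomial.coeff_monomial]
  split_ifs with hc
  · rw [prod_X_eq, show ((Equiv.Perm.sign σ : ℤ) : PolyR g)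
        = MvPolynomial.C ((Equiv.Perm.sign σ : ℤ) : ℂ) from by rw [map_intCast],
      MvPolynomial.C_mul_monomial, mul_one]
  · rfl

end AuxProof

section AuxProof2

open MvPolynomial

lemma monoDeriv_zero' (g : ℕ) (f : SymC g → ℂ) (τ : SymC g) :
    monoDeriv g 0 f τ = f τ := by
  have h : ((0 : Sym2 (Fin g) →₀ ℕ)).toMultiset.toList = [] := by
    simp
  rw [monoDeriv, h]
  simp

lemma monoDeriv_single (g : ℕ) (s : Sym2 (Fin g)) (f : SymC g → ℂ) (τ : SymC g) :
    monoDeriv g (Finsupp.single s 1) f τ = (1 / 2 : ℂ) * fderiv ℂ f τ (symE2 g s) := by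
  have h : (Finsupp.single s 1).toMultiset.toList = [s] := by
    rw [Finsupp.toMultiset_single, one_smul, Multiset.toList_singleton]
  rw [monoDeriv, h]
  show (1 / 2 : ℂ) ^ (1 : ℕ) * (iteratedFDeriv ℂ 1 f τ fun i => symE2 g ([s].get i)) = _
  rw [iteratedFDeriv_one_apply]
  norm_num

lemma sum_single_apply (g : ℕ) (π : Fin g → Fin g) (h' : Fin g) :
    (∑ k : Fin g, Finsupp.single (π k) 1) h'
      = (Finset.univ.filter fun k => π k = h').card := by
  classical
  rw [Finsupp.finset_sum_apply, Finset.card_filter]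
  exact Finset.sum_congr rfl fun k _ => by rw [Finsupp.single_apply]

lemma cond_iff_bijective (g : ℕ) (π : Fin g → Fin g) :
    (∑ i : Fin g, Finsupp.single (π i) 1) = Finsupp.equivFunOnFinite.symm (fun _ => 1)
      ↔ Function.Bijective π := by
  classical
  constructor
  · intro h
    have hcard : ∀ h' : Fin g, (Finset.univ.filter fun k => π k = h').card = 1 := by
      intro h'
      have := congrArg (fun d => d h') h
      simpa [sum_single_apply] using this
    constructor
    · intro i j hij
      obtain ⟨a, ha⟩ := Finset.card_eq_one.mp (hcard (π i))
      have hi : i ∈ Finset.univ.filter fun k => π k = π i := by simp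
      have hj : j ∈ Finset.univ.filter fun k => π k = π i := by simp [hij]
      rw [ha, Finset.mem_singleton] at hi hj
      rw [hi, hj]
    · intro h'
      obtain ⟨a, ha⟩ := Finset.card_eq_one.mp (hcard h')
      refine ⟨a, ?_⟩
      have : a ∈ Finset.univ.filter fun k => π k = h' := by rw [ha]; simp
      simpa using this
  · intro hbij
    set e : Fin g ≃ Fin g := Equiv.ofBijective π hbij with he
    ext h'
    rw [sum_single_apply]
    have : (Finset.univ.filter fun k => π k = h') = {e.symm h'} := by
      ext k
      simp only [Finset.mem_filter, Finset.mem_univ, true_and, Finset.mem_singleton]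
      constructor
      · intro hk
        have : e k = h' := hk
        rw [← this]; simp [he]
      · intro hk
        subst hk
        exact e.apply_symm_apply h'
    rw [this]
    simp

lemma not_mem_fiber_of_cond (g : ℕ) (n : Fin g → ℕ) (π : Fin g → Fin g)
    (hc : (∑ i : Fin g, Finsupp.single (π i) 1) = Finsupp.equivFunOnFinite.symm n)
    (h₀ : Fin g) (hn : n h₀ = 0) : ∀ i, π i ≠ h₀ := by
  classical
  have := congrArg (fun d => d h₀) hc
  simp only [sum_single_apply] at this
  have hcard : (Finset.univ.filter fun k => π k = h₀).card = 0 := by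
    simpa [hn] using this
  intro i hi
  have : i ∈ Finset.univ.filter fun k => π k = h₀ := by simp [hi]
  rw [Finset.card_eq_zero.mp hcard] at this
  exact absurd this (Finset.notMem_empty i)

lemma restrictRow_sum_single_apply (g : ℕ) (π : Fin g → Fin g) (v : Fin g → Sym2 (Fin g))
    (h : Fin g) (s : Sym2 (Fin g)) :
    restrictRow g (∑ i : Fin g, Finsupp.single ((π i, v i) : RVars g) 1) h s
      = ∑ i : Fin g, if ((π i, v i) : RVars g) = (h, s) then 1 else 0 := by
  classical
  rw [restrictRow]
  rw [Finsupp.coe_equivFunOnFinite_symm]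
  rw [Finsupp.finset_sum_apply]
  exact Finset.sum_congr rfl fun i _ => by rw [Finsupp.single_apply]

lemma restrictRow_eq_zero (g : ℕ) (π : Fin g → Fin g) (v : Fin g → Sym2 (Fin g))
    (h₀ : Fin g) (hπ : ∀ i, π i ≠ h₀) :
    restrictRow g (∑ i : Fin g, Finsupp.single ((π i, v i) : RVars g) 1) h₀ = 0 := by
  classical
  ext s
  rw [restrictRow_sum_single_apply]
  simp only [Finsupp.coe_zero, Pi.zero_apply]
  refine Finset.sum_eq_zero fun i _ => ?_
  rw [if_neg]
  intro hcontra
  exact hπ i (congrArg Prod.fst hcontra)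

lemma restrictRow_of_bijective (g : ℕ) (π : Fin g → Fin g) (hbij : Function.Bijective π)
    (v : Fin g → Sym2 (Fin g)) (h : Fin g) :
    restrictRow g (∑ i : Fin g, Finsupp.single ((π i, v i) : RVars g) 1) h
      = Finsupp.single (v ((Equiv.ofBijective π hbij).symm h)) 1 := by
  classical
  set e := Equiv.ofBijective π hbij with he
  ext s
  rw [restrictRow_sum_single_apply, Finsupp.single_apply]
  rw [Finset.sum_eq_single (e.symm h)]
  · have hπ : π (e.symm h) = h := e.apply_symm_apply h
    simp only [hπ, Prod.mk.injEq, true_and]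
  · intro i _ hi
    rw [if_neg]
    intro hcontra
    have : π i = h := congrArg Prod.fst hcontra
    have : e i = h := this
    exact hi (by rw [← this]; simp [he])
  · intro hmem
    exact absurd (Finset.mem_univ _) hmem

end AuxProof2

section AuxProof3

open MvPolynomial

lemma DQop_Rpoly_of_zero (g : ℕ) (n : Fin g → ℕ) (h₀ : Fin g) (hn : n h₀ = 0)
    (F : SymC g → ℂ) (τ : SymC g) (hF0 : F τ = 0) :
    DQop g (Rpoly g n) (fun _ => F) τ = 0 := by
  classical
  rw [Rpoly_eq, DQop_sum]
  refine Finset.sum_eq_zero fun σ _ => ?_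
  rw [DQop_sum]
  refine Finset.sum_eq_zero fun π _ => ?_
  split_ifs with hc
  · rw [DQop_monomial]
    have hval : valD g (fun _ => F) τ
        (∑ i : Fin g, Finsupp.single ((π i, s(σ i, i)) : RVars g) 1) = 0 := by
      rw [valD]
      refine Finset.prod_eq_zero (Finset.mem_univ h₀) ?_
      rw [restrictRow_eq_zero g π _ h₀ (not_mem_fiber_of_cond g n π hc h₀ hn),
        monoDeriv_zero', hF0]
    rw [hval, mul_zero]
  · exact DQop_zero g _ τ

lemma card_bij_filter (g : ℕ) :
    ((Fintype.piFinset fun _ : Fin g => (Finset.univ : Finset (Fin g))).filter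
      fun π => Function.Bijective π).card = Nat.factorial g := by
  classical
  have h1 : ((Fintype.piFinset fun _ : Fin g => (Finset.univ : Finset (Fin g))).filter
      fun π => Function.Bijective π).card = (Finset.univ : Finset (Equiv.Perm (Fin g))).card := by
    refine Finset.card_bij (fun π hπ => Equiv.ofBijective π (Finset.mem_filter.mp hπ).2) ?_ ?_ ?_
    · intro π hπ; exact Finset.mem_univ _
    · intro π hπ π' hπ' heq
      funext x
      exact congrFun (congrArg (fun (e : Fin g ≃ Fin g) => (e : Fin g → Fin g)) heq) x
    · intro e _
      refine ⟨⇑e, ?_, ?_⟩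
      · refine Finset.mem_filter.mpr ⟨?_, e.bijective⟩
        exact Fintype.mem_piFinset.mpr fun i => Finset.mem_univ _
      · exact Equiv.ext fun x => rfl
  rw [h1, Finset.card_univ, Fintype.card_perm, Fintype.card_fin]

lemma DQop_Rpoly_ones (g : ℕ) (F : SymC g → ℂ) (τ : SymC g) :
    DQop g (Rpoly g fun _ => 1) (fun _ => F) τ
      = (Nat.factorial g : ℂ) * (pdMat g F τ).det := by
  classical
  rw [Rpoly_eq, DQop_sum, Matrix.det_apply', Finset.mul_sum]
  refine Finset.sum_congr rfl fun σ _ => ?_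
  rw [DQop_sum]
  have step : ∀ π ∈ Fintype.piFinset fun _ : Fin g => (Finset.univ : Finset (Fin g)),
      DQop g (if (∑ i : Fin g, Finsupp.single (π i) 1)
            = Finsupp.equivFunOnFinite.symm (fun _ => 1) then
          MvPolynomial.monomial (∑ i : Fin g, Finsupp.single ((π i, s(σ i, i)) : RVars g) 1)
            (((Equiv.Perm.sign σ : ℤ) : ℂ)) else 0) (fun _ => F) τ
      = if Function.Bijective π then
          ((Equiv.Perm.sign σ : ℤ) : ℂ) * ∏ i : Fin g, pdMat g F τ (σ i) i else 0 := by
    intro π _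
    by_cases hb : Function.Bijective π
    · rw [if_pos ((cond_iff_bijective g π).mpr hb), DQop_monomial, if_pos hb]
      congr 1
      rw [valD]
      have hfac : ∀ h : Fin g,
          monoDeriv g (restrictRow g
            (∑ i : Fin g, Finsupp.single ((π i, s(σ i, i)) : RVars g) 1) h) F τ
          = pdMat g F τ (σ ((Equiv.ofBijective π hb).symm h)) ((Equiv.ofBijective π hb).symm h) := by
        intro h
        rw [restrictRow_of_bijective g π hb (fun i => s(σ i, i)) h, monoDeriv_single]
        rfl
      rw [Finset.prod_congr rfl fun h _ => hfac h]
      exact Equiv.prod_comp (Equiv.ofBijective π hb).symm fun i => pdMat g F τ (σ i) i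
    · rw [if_neg fun hc => hb ((cond_iff_bijective g π).mp hc), if_neg hb]
      exact DQop_zero g _ τ
  rw [Finset.sum_congr rfl step, ← Finset.sum_filter, Finset.sum_const, card_bij_filter,
    nsmul_eq_mul]

end AuxProof3

/-- For `g ≥ 2`, an integer `a` with `2a ≥ g`, and `F` holomorphic on an open
`U ⊆ Sym_g(ℂ)`, at every `τ ∈ U` with `F(τ) = 0`:
`D_{Q_{g,a}}(F,…,F)(τ) = g!·det(∂F(τ))`. -/
theorem statement_18 (g : ℕ) (hg : 2 ≤ g) (a : ℤ) (ha : (g : ℤ) ≤ 2 * a)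
    (U : Set (SymC g)) (hU : IsOpen U) (F : SymC g → ℂ) (hF : DifferentiableOn ℂ F U) :
    ∀ τ ∈ U, F τ = 0 →
      DQop g (Qpoly g (a : ℂ)) (fun _ => F) τ
        = (Nat.factorial g : ℂ) * (pdMat g F τ).det := by
  classical
  intro τ hτ hF0
  have hC1 : Ccoef g ((a : ℤ) : ℂ) 1 ≠ 0 := by
    rw [Ccoef, if_pos rfl]
    apply mul_ne_zero
    · intro h
      rw [sub_eq_zero] at h
      have hg1 : (g : ℕ) = 1 := by exact_mod_cast h
      omega
    · rw [Finset.prod_ne_zero_iff]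
      intro i hi h
      rw [Finset.mem_Icc] at hi
      have h2 : (2 * ((a : ℤ) : ℂ) - (i : ℂ)) = ((2 * a - (i : ℕ) : ℤ) : ℂ) := by
        push_cast; ring
      rw [h2] at h
      have h3 : (2 * a - (i : ℕ) : ℤ) = 0 := by exact_mod_cast h
      omega
  rw [Qpoly, DQop_smul, DQop_sum]
  have hmem : (fun _ : Fin g => 1) ∈ Finset.Nat.antidiagonalTuple g g := by
    rw [Finset.Nat.mem_antidiagonalTuple]
    simp
  rw [Finset.sum_eq_single_of_mem (fun _ : Fin g => 1) hmem ?side]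
  · rw [DQop_smul, DQop_Rpoly_ones]
    have hc : ccoef g ((a : ℤ) : ℂ) (fun _ : Fin g => 1) = Ccoef g ((a : ℤ) : ℂ) 1 := by
      rw [ccoef, if_pos (fun _ => rfl)]
    rw [hc, ← mul_assoc, inv_mul_cancel₀ hC1, one_mul]
  case side =>
    intro n hn hne
    rw [DQop_smul]
    obtain ⟨h₀, hh₀⟩ : ∃ h₀, n h₀ = 0 := by
      by_contra hcon
      push_neg at hcon
      apply hne
      have hsum : ∑ i : Fin g, n i = g := Finset.Nat.mem_antidiagonalTuple.mp hn
      have hone : ∀ i ∈ (Finset.univ : Finset (Fin g)), 1 ≤ n i :=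
        fun i _ => Nat.one_le_iff_ne_zero.mpr (hcon i)
      have heq : (∑ _i : Fin g, 1) = ∑ i : Fin g, n i := by
        rw [hsum]; simp
      have := (Finset.sum_eq_sum_iff_of_le hone).mp heq
      funext i
      exact (this i (Finset.mem_univ i)).symm
    rw [DQop_Rpoly_of_zero g n h₀ hh₀ F τ hF0, mul_zero]


end
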